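/- With notation as in the preceding bordered matrix Y ∈ so(2l+1,ℂ) built from h = ⊕ a_i J with a_i ≠ 0 and a_i² ≠ a_j² for i≠j, and target eigenvalue data b_1,...,b_l with b_i ≠ 0, b_i² ≠ b_j² for i≠j, and b_j² ≠ a_k² for all j,k: Y has characteristic polynomial t·∏_{i=1}^{l}(t² + b_i²) if and only if for each i, z_{i1}² + z_{i2}² = d_i where d_i = ∏_{j=1}^{l}(b_j² - a_i²) / ∏_{j≠i}(a_j² - a_i²); moreover each d_i is nonzero under these hypotheses. -/

import Mathlib

open Matrix Polynomial

/-- The bordered skew-symmetric matrix `Y ∈ so(2l+1,ℂ)` with top-left `2l×2l`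
block `h = ⊕ᵢ aᵢ·J` (`J = [[0,1],[-1,0]]`), last column
`(z_{11}, z_{12}, …, z_{l1}, z_{l2}, 0)ᵀ` (encoded by `w : Fin (2l) → ℂ`),
and last row the negative transpose. -/
def YB (l : ℕ) (a : Fin l → ℂ) (w : Fin (2 * l) → ℂ) :
    Matrix (Fin (2 * l + 1)) (Fin (2 * l + 1)) ℂ :=
  Matrix.of fun p q =>
    if h1 : (q : ℕ) = (p : ℕ) + 1 ∧ (p : ℕ) % 2 = 0 ∧ (q : ℕ) < 2 * l then
      a ⟨(p : ℕ) / 2, by omega⟩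
    else if h2 : (p : ℕ) = (q : ℕ) + 1 ∧ (q : ℕ) % 2 = 0 ∧ (p : ℕ) < 2 * l then
      -a ⟨(q : ℕ) / 2, by omega⟩
    else if h3 : (q : ℕ) = 2 * l ∧ (p : ℕ) < 2 * l then w ⟨(p : ℕ), by omega⟩
    else if h4 : (p : ℕ) = 2 * l ∧ (q : ℕ) < 2 * l then -w ⟨(q : ℕ), by omega⟩
    else 0

/-- The target border values: `d_i = ∏ⱼ(b_j² - a_i²) / ∏_{j≠i}(a_j² - a_i²)`. -/
noncomputable def dval (l : ℕ) (a b : Fin l → ℂ) (i : Fin l) : ℂ :=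
  (∏ j, (b j ^ 2 - a i ^ 2)) / ∏ j ∈ Finset.univ.erase i, (a j ^ 2 - a i ^ 2)

/-!
Reindexed, `Y` is a `2 × 2`-block-diagonal matrix with blocks `aᵢ J` bordered by one row and
column. Where every `t² + aᵢ² ≠ 0` the Schur complement of the block diagonal part gives
`det (t - Y) = t ∏ᵢ (t² + aᵢ²) + t ∑ᵢ cᵢ ∏_{j ≠ i} (t² + aⱼ²)` with `cᵢ = z_{i1}² + z_{i2}²`,
so this is the characteristic polynomial. Cancelling `t` and substituting `s = t²`, comparing it
with `t ∏ⱼ (t² + bⱼ²)` asks for `∑ᵢ cᵢ ∏_{j ≠ i} (s + aⱼ²) = ∏ⱼ (s + bⱼ²) - ∏ⱼ (s + aⱼ²)`. The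
right side has degree `< l`, so this is Lagrange interpolation at the distinct nodes `s = -aᵢ²`,
and evaluating at them gives `cᵢ = dᵢ`.
-/

open Finset Lagrange

section Interpolation

variable {K ι : Type*} [Field K]

lemma expand_two_nodal_neg_sq (s : Finset ι) (v : ι → K) :
    expand K 2 (nodal s fun i => -v i ^ 2) = ∏ i ∈ s, (X ^ 2 + C (v i) ^ 2) := by
  simp [nodal, map_prod]

variable [Fintype ι] [DecidableEq ι] {x : ι → K}

lemma eval_sum_C_mul_nodal_erase (c : ι → K) (i : ι) :
    (∑ k, C (c k) * nodal (univ.erase k) x).eval (x i) =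
      c i * ∏ j ∈ univ.erase i, (x i - x j) := by
  rw [eval_finsetSum, sum_eq_single i]
  · rw [eval_mul, eval_C, eval_nodal]
  · intro k _ hk
    rw [eval_mul, eval_nodal_at_node (mem_erase.2 ⟨hk.symm, mem_univ i⟩), mul_zero]
  · simp

lemma degree_sum_C_mul_nodal_erase_lt (c : ι → K) :
    (∑ k, C (c k) * nodal (univ.erase k) x).degree < Fintype.card ι := by
  rw [← mem_degreeLT]
  refine Submodule.sum_mem _ fun k _ => ?_
  rw [← smul_eq_C_mul]
  refine Submodule.smul_mem _ _ (mem_degreeLT.2 ?_)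
  rw [degree_nodal, card_erase_of_mem (mem_univ k), card_univ]
  exact_mod_cast Nat.sub_lt (Fintype.card_pos_iff.2 ⟨k⟩) one_pos

omit [DecidableEq ι] in
lemma degree_nodal_sub_nodal_lt (u v : ι → K) :
    (nodal univ u - nodal univ v).degree < Fintype.card ι := by
  rcases isEmpty_or_nonempty ι with hι | hι
  · simp
  have h := degree_sub_lt_left (p := nodal univ u) (q := nodal univ v)
    (by rw [degree_nodal, degree_nodal]) nodal_ne_zero
    (by rw [nodal_monic.leadingCoeff, nodal_monic.leadingCoeff])
  rwa [degree_nodal, card_univ] at h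

lemma sum_C_mul_nodal_erase_eq_iff (hx : Function.Injective x) {f : K[X]}
    (hf : f.degree < Fintype.card ι) (c : ι → K) :
    ∑ k, C (c k) * nodal (univ.erase k) x = f ↔
      ∀ i, c i = f.eval (x i) / ∏ j ∈ univ.erase i, (x i - x j) := by
  have hD (i : ι) : ∏ j ∈ univ.erase i, (x i - x j) ≠ 0 :=
    prod_ne_zero_iff.2 fun j hj => sub_ne_zero.2 (hx.ne (mem_erase.1 hj).1.symm)
  constructor
  · rintro rfl i
    rw [eval_sum_C_mul_nodal_erase, mul_div_cancel_right₀ _ (hD i)]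
  · intro hc
    refine eq_of_degrees_lt_of_eval_index_eq univ hx.injOn
      (by simpa using degree_sum_C_mul_nodal_erase_lt c) (by simpa using hf) fun i _ => ?_
    rw [eval_sum_C_mul_nodal_erase, hc i, div_mul_cancel₀ _ (hD i)]

end Interpolation

lemma dotProduct_blockDiagonal_mulVec {α m ι : Type*} [NonUnitalNonAssocSemiring α] [Fintype m]
    [Fintype ι] [DecidableEq ι] (M : ι → Matrix m m α) (u v : m × ι → α) :
    u ⬝ᵥ blockDiagonal M *ᵥ v = ∑ i, (fun r => u (r, i)) ⬝ᵥ M i *ᵥ fun r => v (r, i) := by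
  simp only [dotProduct, mulVec, blockDiagonal_apply, Fintype.sum_prod_type, ite_mul, zero_mul,
    sum_ite_eq, mem_univ, if_true]
  rw [sum_comm]

section BorderedSkew

variable {R ι : Type*} [CommRing R]

def skewBlock (a : R) : Matrix (Fin 2) (Fin 2) R := !![0, a; -a, 0]

lemma det_scalar_sub_skewBlock (t a : R) :
    (scalar (Fin 2) t - skewBlock a).det = t ^ 2 + a ^ 2 := by
  simp [skewBlock, det_fin_two]
  ring

lemma scalar_add_skewBlock_mul_scalar_sub_skewBlock (t a : R) :
    (scalar (Fin 2) t + skewBlock a) * (scalar (Fin 2) t - skewBlock a) =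
      scalar (Fin 2) (t ^ 2 + a ^ 2) := by
  ext r s
  fin_cases r <;> fin_cases s <;> simp [skewBlock, mul_apply, Fin.sum_univ_two] <;> ring

lemma dotProduct_scalar_add_skewBlock_mulVec (t a : R) (u : Fin 2 → R) :
    u ⬝ᵥ (scalar (Fin 2) t + skewBlock a) *ᵥ u = t * (u 0 ^ 2 + u 1 ^ 2) := by
  simp [skewBlock, dotProduct, mulVec, Fin.sum_univ_two]
  ring

variable [Fintype ι] [DecidableEq ι]

def borderedSkew (a : ι → R) (z : Fin 2 × ι → R) :
    Matrix (Fin 2 × ι ⊕ Unit) (Fin 2 × ι ⊕ Unit) R :=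
  fromBlocks (blockDiagonal fun i => skewBlock (a i)) (replicateCol Unit z)
    (-replicateRow Unit z) 0

lemma scalar_sub_borderedSkew (t : R) (a : ι → R) (z : Fin 2 × ι → R) :
    scalar _ t - borderedSkew a z =
      fromBlocks (blockDiagonal fun i => scalar (Fin 2) t - skewBlock (a i))
        (-replicateCol Unit z) (replicateRow Unit z) (scalar Unit t) := by
  ext (⟨r, i⟩ | u) (⟨s, j⟩ | v) <;>
    simp [borderedSkew, blockDiagonal_apply, diagonal_apply, Prod.ext_iff]
  by_cases h : i = j <;> simp [h]

variable {K : Type*} [Field K]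

lemma det_scalar_sub_borderedSkew {t : K} {a : ι → K} (z : Fin 2 × ι → K)
    (ht : ∀ i, t ^ 2 + a i ^ 2 ≠ 0) :
    (scalar _ t - borderedSkew a z).det =
      t * ∏ i, (t ^ 2 + a i ^ 2) +
        t * ∑ i, (z (0, i) ^ 2 + z (1, i) ^ 2) * ∏ j ∈ univ.erase i, (t ^ 2 + a j ^ 2) := by
  set A := blockDiagonal fun i => scalar (Fin 2) t - skewBlock (a i)
  set B := blockDiagonal fun i => (t ^ 2 + a i ^ 2)⁻¹ • (scalar (Fin 2) t + skewBlock (a i))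
  have hBA : B * A = 1 := by
    rw [← blockDiagonal_mul, ← blockDiagonal_one]
    congr 1
    funext i
    rw [smul_mul_assoc, scalar_add_skewBlock_mul_scalar_sub_skewBlock, scalar_apply,
      ← smul_one_eq_diagonal, smul_smul, inv_mul_cancel₀ (ht i), one_smul, Pi.one_apply]
  let _ := invertibleOfLeftInverse A B hBA
  have hquad : (replicateRow Unit z * ⅟A * -replicateCol Unit z) () () = -(z ⬝ᵥ B *ᵥ z) := by
    rw [Matrix.mul_neg, neg_apply, Matrix.mul_assoc, ← replicateCol_mulVec,
      replicateRow_mul_replicateCol_apply]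
    rfl
  rw [scalar_sub_borderedSkew, det_fromBlocks₁₁, det_unique (n := Unit), Matrix.sub_apply, hquad,
    dotProduct_blockDiagonal_mulVec, det_blockDiagonal]
  simp only [det_scalar_sub_skewBlock, smul_mulVec, dotProduct_smul,
    dotProduct_scalar_add_skewBlock_mulVec, smul_eq_mul]
  simp only [scalar_apply, diagonal_apply_eq, sub_neg_eq_add, mul_add, mul_sum]
  rw [mul_comm]
  congr 1
  refine sum_congr rfl fun i _ => ?_
  rw [← mul_prod_erase univ _ (mem_univ i)]
  field_simp [ht i]

lemma charpoly_borderedSkew [Infinite K] (a : ι → K) (z : Fin 2 × ι → K) :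
    (borderedSkew a z).charpoly =
      X * expand K 2 (nodal univ (fun i => -a i ^ 2) +
        ∑ i, C (z (0, i) ^ 2 + z (1, i) ^ 2) * nodal (univ.erase i) fun j => -a j ^ 2) := by
  have hΔ : expand K 2 (nodal univ fun i => -a i ^ 2) ≠ 0 :=
    (expand_ne_zero two_pos).2 nodal_ne_zero
  -- multiplied by `∏ᵢ (t² + aᵢ²)`, the identity also holds where the Schur complement is unavailable
  refine mul_left_cancel₀ hΔ (Polynomial.funext fun t => ?_)
  simp only [expand_two_nodal_neg_sq, map_add, map_sum, map_mul, expand_C, eval_mul, eval_add,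
    eval_finsetSum, eval_prod, eval_X, eval_C, eval_pow]
  rcases eq_or_ne (∏ i, (t ^ 2 + a i ^ 2)) 0 with hΔt | hΔt
  · rw [hΔt, zero_mul, zero_mul]
  · rw [eval_charpoly, det_scalar_sub_borderedSkew z fun i => prod_ne_zero_iff.1 hΔt i (mem_univ i)]
    ring

end BorderedSkew

def finPairEquiv (l : ℕ) : Fin 2 × Fin l ≃ Fin (2 * l) :=
  (Equiv.prodComm _ _).trans (finProdFinEquiv.trans (finCongr (Nat.mul_comm l 2)))

lemma finPairEquiv_apply {l : ℕ} (r : Fin 2) (i : Fin l) :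
    finPairEquiv l (r, i) = ⟨2 * i + r, by omega⟩ := by
  ext
  simp [finPairEquiv, add_comm]

def finBorderEquiv (l : ℕ) : Fin (2 * l + 1) ≃ (Fin 2 × Fin l) ⊕ Unit :=
  finSumFinEquiv.symm.trans (Equiv.sumCongr (finPairEquiv l).symm (Equiv.ofUnique _ _))

lemma reindex_YB (l : ℕ) (a : Fin l → ℂ) (w : Fin (2 * l) → ℂ) :
    reindex (finBorderEquiv l) (finBorderEquiv l) (YB l a w) =
      borderedSkew a (w ∘ finPairEquiv l) := by
  ext (⟨r, i⟩ | u) (⟨s, j⟩ | v) <;>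
    simp [finBorderEquiv, YB, borderedSkew, finPairEquiv_apply, blockDiagonal_apply]
  · fin_cases r <;> fin_cases s <;> simp [skewBlock, Fin.ext_iff] <;>
      split_ifs <;> first | omega | simp_all [Fin.val_inj]
  · split_ifs <;> first | rfl | omega
  · split_ifs <;> first | rfl | omega

/-- Under the genericity hypotheses `aᵢ ≠ 0`, `aᵢ² ≠ a_j²` (`i ≠ j`), `bᵢ ≠ 0`,
`bᵢ² ≠ b_j²` (`i ≠ j`) and `b_j² ≠ a_k²`, the bordered matrix `Y` has
characteristic polynomial `t·∏ᵢ(t² + bᵢ²)` if and only if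
`z_{i1}² + z_{i2}² = dᵢ` for all `i`; moreover every `dᵢ` is nonzero. -/
theorem YB_charpoly_iff (l : ℕ) (a b : Fin l → ℂ) (w : Fin (2 * l) → ℂ)
    (ha : ∀ i j, i ≠ j → a i ^ 2 ≠ a j ^ 2)
    (hab : ∀ j k, b j ^ 2 ≠ a k ^ 2) :
    ((YB l a w).charpoly = X * ∏ i : Fin l, (X ^ 2 + C (b i) ^ 2) ↔
      ∀ i : Fin l,
        w ⟨2 * (i : ℕ), by have := i.isLt; omega⟩ ^ 2 +
          w ⟨2 * (i : ℕ) + 1, by have := i.isLt; omega⟩ ^ 2 = dval l a b i) ∧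
    ∀ i : Fin l, dval l a b i ≠ 0 := by
  let x : Fin l → ℂ := fun i => -a i ^ 2
  have hx : Function.Injective x := fun i j hij => by_contra fun hne => ha i j hne (neg_inj.1 hij)
  have hdval (i : Fin l) : dval l a b i =
      (nodal univ (fun j => -b j ^ 2) - nodal univ x).eval (x i) /
        ∏ j ∈ univ.erase i, (x i - x j) := by
    rw [eval_sub, eval_nodal_at_node (mem_univ i), sub_zero, eval_nodal, dval]
    congr 1 <;> exact prod_congr rfl fun j _ => by ring
  refine ⟨?_, fun i => ?_⟩
  · rw [← charpoly_reindex (finBorderEquiv l), reindex_YB, charpoly_borderedSkew,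
      ← expand_two_nodal_neg_sq, mul_right_inj' X_ne_zero, (expand_injective two_pos).eq_iff,
      add_comm, ← eq_sub_iff_add_eq,
      sum_C_mul_nodal_erase_eq_iff hx (degree_nodal_sub_nodal_lt _ _)]
    simp [x, hdval, finPairEquiv_apply]
  · rw [dval]
    exact div_ne_zero (prod_ne_zero_iff.2 fun j _ => sub_ne_zero.2 (hab j i))
      (prod_ne_zero_iff.2 fun j hj => sub_ne_zero.2 (ha j i (mem_erase.1 hj).1))
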